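/- arXiv:2212.05526 — 4 statements merged into one kernel-verified Lean document; each statement's English description precedes it below -/
import Mathlib

section
/- (General join decomposition, concrete form of Lemma 1.) Let ι be a finite index set of tables, where table i is a finite multiset A_i of records of type R_i. Let G be a finite set of equivalent-key-group variables with finite value domain Val, and for each i let S_i ⊆ G and κ_i : R_i → (S_i → Val) be the key map of table i. Assume every g ∈ G lies in S_i for at least one i. Define the join as the multiset of tuples r ∈ Π_{i∈ι} A_i such that for all i, j ∈ ι and every g ∈ S_i ∩ S_j, κ_i(r_i)(g) = κ_j(r_j)(g). Then |Join| = ∑_{a : G → Val} Π_{i∈ι} |{x ∈ A_i : ∀ g ∈ S_i, κ_i(x)(g) = a(g)}|, i.e., the join cardinality equals the sum, over all assignments of values to the group variables, of the product of per-table conditional counts. -/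
/-!
A tuple of records lies in the join iff the key maps of its records glue to a global assignment
`a : G → Val`, and this assignment is unique because every group is touched by some table. Hence
the join is the disjoint union over `a` of the tuples all of whose records agree with `a`, and
that set is the product of the per-table filters, whose size is the product of the counts.
-/
namespace Multiset

theorem filter_pi {α : Type*} [DecidableEq α] {β : α → Type*} {m : Multiset α} (hm : m.Nodup)
    (t : ∀ a, Multiset (β a)) (p : ∀ a, β a → Prop) [∀ a, DecidablePred (p a)] :
    (pi m t).filter (fun f => ∀ a (h : a ∈ m), p a (f a h)) =
      pi m fun a => (t a).filter (p a) := by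
  induction m using Multiset.induction with
  | empty => simp
  | cons a m ih =>
    obtain ⟨ham, hm⟩ := nodup_cons.1 hm
    have cons_iff : ∀ (b : β a) (f : ∀ i ∈ m, β i),
        (∀ i (h : i ∈ a ::ₘ m), p i (Pi.cons m a b f i h)) ↔
          p a b ∧ ∀ i (h : i ∈ m), p i (f i h) := by
      intro b f
      refine ⟨fun H => ⟨?_, fun i h => ?_⟩, ?_⟩
      · simpa only [Pi.cons_same] using H a (mem_cons_self a m)
      · simpa [Pi.cons_ne _ (ne_of_mem_of_not_mem h ham)] using H i (mem_cons_of_mem h)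
      · rintro ⟨hb, hf⟩ i h
        rcases eq_or_ne i a with rfl | hne
        · rwa [Pi.cons_same]
        · simpa [Pi.cons_ne _ hne] using hf i ((mem_cons.1 h).resolve_left hne)
    rw [pi_cons, pi_cons, filter_bind, bind_filter, ← ih hm]
    refine bind_congr fun b _ => ?_
    rw [filter_map]
    split_ifs with hb
    · exact congrArg _ (filter_congr fun f _ => (cons_iff b f).trans (and_iff_right hb))
    · rw [map_eq_zero, filter_eq_nil]
      exact fun f _ H => hb ((cons_iff b f).1 H).1

theorem countP_pi {α : Type*} [DecidableEq α] {β : α → Type*} {m : Multiset α} (hm : m.Nodup)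
    (t : ∀ a, Multiset (β a)) (p : ∀ a, β a → Prop) [∀ a, DecidablePred (p a)] :
    (pi m t).countP (fun f => ∀ a (h : a ∈ m), p a (f a h)) =
      (m.map fun a => (t a).countP (p a)).prod := by
  simp only [countP_eq_card_filter, filter_pi hm, card_pi]

theorem sum_countP_eq_countP_exists {α β : Type*} [Fintype β] (s : Multiset α)
    (Q : β → α → Prop)
    [∀ b, DecidablePred (Q b)] [DecidablePred fun x => ∃ b, Q b x]
    (huniq : ∀ x b b', Q b x → Q b' x → b = b') :
    ∑ b, s.countP (Q b) = s.countP fun x => ∃ b, Q b x := by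
  induction s using Multiset.induction with
  | empty => simp
  | cons x s ih =>
    simp only [countP_cons, Finset.sum_add_distrib, ih]
    congr 1
    by_cases h : ∃ b, Q b x
    · obtain ⟨b, hb⟩ := h
      rw [if_pos ⟨b, hb⟩, Finset.sum_eq_single b
        (fun b' _ hne => if_neg fun hb' => hne (huniq x b' b hb' hb)) (by simp), if_pos hb]
    · simp [not_exists.1 h]

end Multiset

section Gluing

variable {ι G Val : Type*} {S : ι → Finset G}

theorem eq_of_agree_on_cover (hcover : ∀ g : G, ∃ i, g ∈ S i)
    {x : ∀ i, {g // g ∈ S i} → Val} {a a' : G → Val}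
    (ha : ∀ i g (hg : g ∈ S i), x i ⟨g, hg⟩ = a g)
    (ha' : ∀ i g (hg : g ∈ S i), x i ⟨g, hg⟩ = a' g) :
    a = a' := by
  funext g
  obtain ⟨i, hg⟩ := hcover g
  rw [← ha i g hg, ha' i g hg]

theorem exists_extension_iff_pairwise_agree (hcover : ∀ g : G, ∃ i, g ∈ S i)
    (x : ∀ i, {g // g ∈ S i} → Val) :
    (∃ a : G → Val, ∀ i g (hg : g ∈ S i), x i ⟨g, hg⟩ = a g) ↔
      ∀ i j g (hgi : g ∈ S i) (hgj : g ∈ S j), x i ⟨g, hgi⟩ = x j ⟨g, hgj⟩ := by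
  refine ⟨fun ⟨a, ha⟩ i j g hgi hgj => (ha i g hgi).trans (ha j g hgj).symm, fun H => ?_⟩
  choose owner howner using hcover
  exact ⟨fun g => x (owner g) ⟨g, howner g⟩, fun i g hg => H i (owner g) g hg (howner g)⟩

end Gluing

/-- General join decomposition, concrete form of Lemma 1.
The cardinality of a general equi-join —  the multiset of tuples (one record per
table) agreeing on every equivalent-key-group variable shared by two tables —
equals the sum, over all assignments of values to the group variables, of the
product of the per-table conditional counts, provided every group variable is
touched by at least one table. -/
theorem join_card_eq_sum_assignments_prod_counts
    {ι G Val : Type*} [Fintype ι] [DecidableEq ι]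
    [Fintype G] [DecidableEq G] [Fintype Val] [DecidableEq Val]
    {R : ι → Type*} (A : ∀ i, Multiset (R i))
    (S : ι → Finset G)
    (κ : ∀ i, R i → {g // g ∈ S i} → Val)
    (hcover : ∀ g : G, ∃ i, g ∈ S i) :
    Multiset.card
      ((Multiset.pi (Finset.univ : Finset ι).val (fun i => A i)).filter
        (fun r => ∀ (i j : ι) (g : G) (hgi : g ∈ S i) (hgj : g ∈ S j),
          κ i (r i (Finset.mem_univ i)) ⟨g, hgi⟩ =
            κ j (r j (Finset.mem_univ j)) ⟨g, hgj⟩)) =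
      ∑ a : G → Val, ∏ i : ι,
        (A i).countP (fun x => ∀ (g : G) (hg : g ∈ S i), κ i x ⟨g, hg⟩ = a g) := by
  let Q (a : G → Val) (r : ∀ i ∈ (Finset.univ : Finset ι).val, R i) : Prop :=
    ∀ i (h : i ∈ Finset.univ.val) (g : G) (hg : g ∈ S i), κ i (r i h) ⟨g, hg⟩ = a g
  calc _ = (Multiset.pi Finset.univ.val A).countP (fun r => ∃ a, Q a r) := by
        rw [← Multiset.countP_eq_card_filter]
        exact Multiset.countP_congr rfl fun r _ => propext <|
          (exists_extension_iff_pairwise_agree hcover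
            fun i => κ i (r i (Finset.mem_univ i))).symm.trans (by simp [Q])
    _ = ∑ a, (Multiset.pi Finset.univ.val A).countP (Q a) :=
        (Multiset.sum_countP_eq_countP_exists _ Q fun r a a' ha ha' =>
          eq_of_agree_on_cover hcover (fun i => ha i (Finset.mem_univ i))
            fun i => ha' i (Finset.mem_univ i)).symm
    _ = _ := Finset.sum_congr rfl fun a _ => by
        convert Multiset.countP_pi Finset.univ.nodup A
          (fun i x => ∀ g (hg : g ∈ S i), κ i x ⟨g, hg⟩ = a g) using 2
        rfl
end

section
/- (Four-table star/chain query, Equation (2).) Let A, B, C, D be tables with key functions id, id2 : R_A → V₁ × V₂ projections (i.e., A carries keys A.id into V₁ and A.id2 into V₂), B carries keys B.Aid into V₁ and B.Cid into V₃, C carries keys C.Aid2 into V₂ and C.id into V₃, and D carries key D.Cid into V₃, with all value domains finite; let Q_A, Q_B, Q_C, Q_D be filter predicates. Then the cardinality of the join with conditions A.id = B.Aid, A.id2 = C.Aid2, B.Cid = C.id = D.Cid on the filtered tables equals ∑_{a1 ∈ V₁} ∑_{a2 ∈ V₂} ∑_{c ∈ V₃} c_{A|Q_A}(a1, a2) ·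 c_{B|Q_B}(a1, c) · c_{C|Q_C}(a2, c) · c_{D|Q_D}(c), where each factor is the joint count of the indicated key values among the filtered records of that table. -/
/-! Classify each join tuple `(a, b, c, d)` by the key triple `(idA a, id2A a, idC c)`. Once the
triple `(a1, a2, c)` is fixed, the join conditions decouple into one condition per table, so the
tuples of that class form a product of four sub-multisets, whose size is the product of the four
joint counts. -/

namespace Multiset

variable {α β : Type*}

theorem filter_product_and (s : Multiset α) (t : Multiset β) (p : α → Prop) (q : β → Prop)
    [DecidablePred p] [DecidablePred q] :
    (s ×ˢ t).filter (fun x => p x.1 ∧ q x.2) = s.filter p ×ˢ t.filter q := by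
  induction s using Multiset.induction_on with
  | empty => simp
  | cons a s ih =>
    by_cases ha : p a <;> simp [cons_product, filter_map, ha, ih]

theorem card_eq_sum_countP_eq {V : Type*} [Fintype V] [DecidableEq V]
    (s : Multiset α) (f : α → V) :
    card s = ∑ v : V, s.countP (fun x => f x = v) := by
  rw [← card_map f s, ← sum_count_eq_card (s := Finset.univ) (fun _ _ => Finset.mem_univ _)]
  simp only [count_map, countP_eq_card_filter, eq_comm]

theorem card_join_eq_sum_mul_countP
    {R_A R_B R_C R_D V₁ V₂ V₃ : Type*}
    [Fintype V₁] [DecidableEq V₁] [Fintype V₂] [DecidableEq V₂] [Fintype V₃] [DecidableEq V₃]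
    (A : Multiset R_A) (B : Multiset R_B) (C : Multiset R_C) (D : Multiset R_D)
    (idA : R_A → V₁) (id2A : R_A → V₂) (AidB : R_B → V₁) (CidB : R_B → V₃)
    (Aid2C : R_C → V₂) (idC : R_C → V₃) (CidD : R_D → V₃) :
    card ((A ×ˢ B ×ˢ C ×ˢ D).filter
        (fun p => idA p.1 = AidB p.2.1 ∧ id2A p.1 = Aid2C p.2.2.1 ∧
          CidB p.2.1 = idC p.2.2.1 ∧ idC p.2.2.1 = CidD p.2.2.2)) =
      ∑ a1 : V₁, ∑ a2 : V₂, ∑ c : V₃,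
        A.countP (fun a => idA a = a1 ∧ id2A a = a2) *
        B.countP (fun b => AidB b = a1 ∧ CidB b = c) *
        C.countP (fun x => Aid2C x = a2 ∧ idC x = c) *
        D.countP (fun d => CidD d = c) := by
  rw [card_eq_sum_countP_eq _ (fun p => (idA p.1, id2A p.1, idC p.2.2.1)),
    Fintype.sum_prod_type]
  refine Finset.sum_congr rfl fun a1 _ => ?_
  rw [Fintype.sum_prod_type]
  refine Finset.sum_congr rfl fun a2 _ => ?_
  refine Finset.sum_congr rfl fun c _ => ?_
  have decouple : ∀ p : R_A × R_B × R_C × R_D,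
      ((idA p.1, id2A p.1, idC p.2.2.1) = (a1, a2, c) ∧
        idA p.1 = AidB p.2.1 ∧ id2A p.1 = Aid2C p.2.2.1 ∧
          CidB p.2.1 = idC p.2.2.1 ∧ idC p.2.2.1 = CidD p.2.2.2) ↔
      (idA p.1 = a1 ∧ id2A p.1 = a2) ∧ (AidB p.2.1 = a1 ∧ CidB p.2.1 = c) ∧
        (Aid2C p.2.2.1 = a2 ∧ idC p.2.2.1 = c) ∧ CidD p.2.2.2 = c := by
    grind
  rw [countP_filter, countP_congr rfl fun p _ => propext (decouple p)]
  simp only [mul_assoc, countP_eq_card_filter]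
  simp only [← card_product, ← filter_product_and]

end Multiset

/-- Four-table star/chain query, Equation (2).
The cardinality of the join of filtered tables A, B, C, D with conditions
A.id = B.Aid, A.id2 = C.Aid2, B.Cid = C.id = D.Cid equals the triple sum over
the three key domains of the products of single-table joint counts. -/
theorem four_table_join_card_eq_triple_sum
    {R_A R_B R_C R_D V₁ V₂ V₃ : Type*}
    [Fintype V₁] [DecidableEq V₁] [Fintype V₂] [DecidableEq V₂]
    [Fintype V₃] [DecidableEq V₃]
    (A : Multiset R_A) (B : Multiset R_B) (C : Multiset R_C) (D : Multiset R_D)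
    (idA : R_A → V₁) (id2A : R_A → V₂)
    (AidB : R_B → V₁) (CidB : R_B → V₃)
    (Aid2C : R_C → V₂) (idC : R_C → V₃)
    (CidD : R_D → V₃)
    (QA : R_A → Prop) (QB : R_B → Prop) (QC : R_C → Prop) (QD : R_D → Prop)
    [DecidablePred QA] [DecidablePred QB] [DecidablePred QC] [DecidablePred QD] :
    Multiset.card
      (((A.filter QA) ×ˢ (B.filter QB) ×ˢ (C.filter QC) ×ˢ (D.filter QD)).filter
        (fun p => idA p.1 = AidB p.2.1 ∧ id2A p.1 = Aid2C p.2.2.1 ∧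
          CidB p.2.1 = idC p.2.2.1 ∧ idC p.2.2.1 = CidD p.2.2.2)) =
      ∑ a1 : V₁, ∑ a2 : V₂, ∑ c : V₃,
        ((A.filter QA).countP (fun a => idA a = a1 ∧ id2A a = a2)) *
        ((B.filter QB).countP (fun b => AidB b = a1 ∧ CidB b = c)) *
        ((C.filter QC).countP (fun x => Aid2C x = a2 ∧ idC x = c)) *
        ((D.filter QD).countP (fun d => CidD d = c)) := by
  exact Multiset.card_join_eq_sum_mul_countP (A.filter QA) (B.filter QB) (C.filter QC)
    (D.filter QD) idA id2A AidB CidB Aid2C idC CidD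
end

section
/- (Global probabilistic-bound validity, Equation (4)/(5).) Let A and B be tables with join-key functions κ_A, κ_B into a finite value domain V, let Q_A, Q_B be filter predicates, and let {bin_1, …, bin_k} be a partition of V. For each bin i, let S_{A,i} = ∑_{v ∈ bin_i} c_{A|Q_A,κ_A}(v), V*_{A,i} = max_{v ∈ bin_i} c_{A|Q_A,κ_A}(v) (taken as 0 for an empty bin), and analogously S_{B,i}, V*_{B,i}. Then the true join cardinality is upper bounded bin-by-bin: |{(a,b) : a ∈ A|Q_A, b ∈ B|Q_B, κ_A(a) = κ_B(b)}| ≤ ∑_{i=1}^{k} min(S_{A,i} · V*_{B,i}, S_{B,i} · V*_{A,i}). -/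
/-!
Splitting the pairs of the join by their common key `v` gives
`|A ⋈ B| = ∑ v, c_A(v) · c_B(v)`. Grouping this sum by bins and bounding, inside a bin, one
factor of each term by its maximum over the bin yields both `S_{A,i} · V*_{B,i}` and
`S_{B,i} · V*_{A,i}` as upper bounds for the contribution of bin `i`.
-/

theorem Multiset.card_filter_product_eq_sum_countP_mul {α β V : Type*} [Fintype V]
    [DecidableEq V] (A : Multiset α) (B : Multiset β) (κA : α → V) (κB : β → V) :
    card ((A ×ˢ B).filter (fun p => κA p.1 = κB p.2)) =
      ∑ v, A.countP (fun a => κA a = v) * B.countP (fun b => κB b = v) := by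
  induction A using Multiset.induction with
  | empty => simp
  | cons a A ih =>
    simp [cons_product, filter_map, countP_cons, ih, add_mul, Finset.sum_add_distrib,
      ← countP_eq_card_filter, eq_comm, add_comm]

open Function in
theorem Finset.sum_univ_eq_sum_sum_of_cover {ι V M : Type*} [Fintype ι] [Fintype V]
    [DecidableEq V] [AddCommMonoid M] (bins : ι → Finset V)
    (hdisj : Pairwise (Disjoint on bins)) (hcover : ∀ v, ∃ i, v ∈ bins i) (f : V → M) :
    ∑ v, f v = ∑ i, ∑ v ∈ bins i, f v := by
  have huniv : (univ : Finset V) = univ.biUnion bins :=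
    (eq_univ_of_forall fun v => mem_biUnion.2 <| (hcover v).imp fun i hi => ⟨mem_univ i, hi⟩).symm
  rw [huniv, sum_biUnion fun i _ j _ hij => hdisj hij]

theorem Finset.sum_mul_le_sum_mul_sup {ι R : Type*} [Semiring R] [LinearOrder R] [OrderBot R]
    [IsOrderedRing R] [CanonicallyOrderedAdd R] (s : Finset ι) (f g : ι → R) :
    ∑ v ∈ s, f v * g v ≤ (∑ v ∈ s, f v) * s.sup g := by
  rw [sum_mul]
  exact sum_le_sum fun v hv => mul_le_mul_of_nonneg_left (le_sup hv) zero_le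

/-- Global probabilistic-bound validity, Equation (4)/(5).
Given a partition of the key domain into bins, the true filtered equi-join
cardinality is upper bounded bin-by-bin by the most-frequent-value bound
min(S_A·V*_B, S_B·V*_A). -/
theorem equijoin_card_le_binned_mfv_bound
    {R_A R_B V : Type*} [Fintype V] [DecidableEq V]
    (A : Multiset R_A) (B : Multiset R_B)
    (κA : R_A → V) (κB : R_B → V)
    (QA : R_A → Prop) (QB : R_B → Prop)
    [DecidablePred QA] [DecidablePred QB]
    (k : ℕ) (bins : Fin k → Finset V)
    (hdisj : ∀ i j, i ≠ j → Disjoint (bins i) (bins j))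
    (hcover : ∀ v : V, ∃ i, v ∈ bins i) :
    Multiset.card
      (((A.filter QA) ×ˢ (B.filter QB)).filter (fun p => κA p.1 = κB p.2)) ≤
      ∑ i : Fin k,
        min
          ((∑ v ∈ bins i, (A.filter QA).countP (fun a => κA a = v)) *
            ((bins i).sup (fun v => (B.filter QB).countP (fun b => κB b = v))))
          ((∑ v ∈ bins i, (B.filter QB).countP (fun b => κB b = v)) *
            ((bins i).sup (fun v => (A.filter QA).countP (fun a => κA a = v)))) := by
  rw [Multiset.card_filter_product_eq_sum_countP_mul,
    Finset.sum_univ_eq_sum_sum_of_cover bins hdisj hcover]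
  exact Finset.sum_le_sum fun i _ => le_min (Finset.sum_mul_le_sum_mul_sup _ _ _)
    ((Finset.sum_congr rfl fun v _ => mul_comm _ _).trans_le (Finset.sum_mul_le_sum_mul_sup _ _ _))
end

section
/- (Per-bin bound, three tables on a common key, appendix Case 2.) Let s be a finite set of values and f, g, h : s → ℕ functions with sums S_f, S_g, S_h and maxima M_f, M_g, M_h over s (maxima taken as 0 if s is empty). Then ∑_{v ∈ s} f(v) · g(v) · h(v) ≤ min(S_f · M_g · M_h, S_g · M_f · M_h, S_h · M_f · M_g). Consequently, for three tables A, B, C joined on the condition that their keys into a finite domain V are all equal, with V partitioned into bins, the join cardinality of the filtered tables is at most ∑_i min(S_{A,i} · V*_{B,i} · V*_{C,i}, S_{B,i} · V*_{A,i} · V*_{C,i}, S_{C,i} · V*_{A,i} · V*_{B,i}). -/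
/-!
Bounding each term `f v * g v * h v` by `f v * max g * max h` and summing over the bin gives
`S_f * M_g * M_h`; keeping `g` or `h` instead of `f` gives the other two bounds. The common-key
join has exactly `c_A(v) * c_B(v) * c_C(v)` triples with key `v`, so its cardinality splits as a
sum over the bins, and the per-bin bound applies to each bin.
-/

open Finset Function

section PerBin

variable {ι R : Type*} [CommSemiring R] [LinearOrder R] [OrderBot R] [CanonicallyOrderedAdd R]

theorem Finset.sum_mul_mul_le_sum_mul_sup_mul_sup (s : Finset ι) (f g h : ι → R) :
    ∑ i ∈ s, f i * g i * h i ≤ (∑ i ∈ s, f i) * s.sup g * s.sup h := by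
  rw [sum_mul, sum_mul]
  exact sum_le_sum fun i hi => mul_le_mul' (mul_le_mul' le_rfl (le_sup hi)) (le_sup hi)

theorem Finset.sum_mul_mul_le_min (s : Finset ι) (f g h : ι → R) :
    ∑ i ∈ s, f i * g i * h i ≤
      min ((∑ i ∈ s, f i) * s.sup g * s.sup h)
        (min ((∑ i ∈ s, g i) * s.sup f * s.sup h)
          ((∑ i ∈ s, h i) * s.sup f * s.sup g)) := by
  refine le_min (s.sum_mul_mul_le_sum_mul_sup_mul_sup f g h) (le_min ?_ ?_)
  · simpa only [mul_comm (f _) (g _)] using s.sum_mul_mul_le_sum_mul_sup_mul_sup g f h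
  · simpa only [mul_comm, mul_left_comm] using s.sum_mul_mul_le_sum_mul_sup_mul_sup h f g

end PerBin

theorem Finset.sum_univ_eq_sum_sum_of_partition {ι V M : Type*} [Fintype ι] [Fintype V]
    [DecidableEq V] [AddCommMonoid M] (bins : ι → Finset V) (hdisj : Pairwise (Disjoint on bins))
    (hcover : ∀ v, ∃ i, v ∈ bins i) (F : V → M) :
    ∑ v, F v = ∑ i, ∑ v ∈ bins i, F v := by
  rw [← sum_biUnion (hdisj.set_pairwise _)]
  congr 1
  ext v
  simpa using hcover v

namespace Multiset

theorem countP_product {α β : Type*} (s : Multiset α) (t : Multiset β) (p : α → Prop)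
    (q : β → Prop) [DecidablePred p] [DecidablePred q] :
    (s ×ˢ t).countP (fun x => p x.1 ∧ q x.2) = s.countP p * t.countP q := by
  induction s using Multiset.induction with
  | empty => simp
  | cons a s ih =>
    by_cases ha : p a <;>
      simp [cons_product, countP_map, ih, ha, add_mul, add_comm, ← countP_eq_card_filter]

theorem countP_eq_sum_countP_and_eq {α V : Type*} [Fintype V] [DecidableEq V]
    (s : Multiset α) (p : α → Prop) [DecidablePred p] (κ : α → V) :
    s.countP p = ∑ v, s.countP (fun x => p x ∧ κ x = v) := by
  induction s using Multiset.induction with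
  | empty => simp
  | cons a s ih =>
    by_cases ha : p a <;> simp [countP_cons, ih, ha, sum_add_distrib]

theorem card_filter_keys_eq_eq_sum_countP_mul {R_A R_B R_C V : Type*} [Fintype V]
    [DecidableEq V] (A : Multiset R_A) (B : Multiset R_B) (C : Multiset R_C)
    (κA : R_A → V) (κB : R_B → V) (κC : R_C → V) :
    card ((A ×ˢ B ×ˢ C).filter (fun p => κA p.1 = κB p.2.1 ∧ κB p.2.1 = κC p.2.2)) =
      ∑ v, A.countP (fun a => κA a = v) * B.countP (fun b => κB b = v) *
        C.countP (fun c => κC c = v) := by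
  rw [← countP_eq_card_filter, countP_eq_sum_countP_and_eq _ _ (fun p => κA p.1)]
  refine sum_congr rfl fun v _ => ?_
  rw [mul_assoc, ← countP_product B C, ← countP_product A (B ×ˢ C)]
  refine countP_congr rfl fun p _ => ?_
  grind

end Multiset

/-- Per-bin bound, three tables on a common key, appendix
Case 2. For any bin s and per-value counts f, g, h, the sum ∑ f·g·h is at most
the minimum of the three total-times-maxima products; consequently the
cardinality of the three-table common-key join of filtered tables is bounded by
the bin-wise sum of such minima. -/
theorem three_table_mfv_bound
    {R_A R_B R_C V : Type*} [Fintype V] [DecidableEq V]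
    (A : Multiset R_A) (B : Multiset R_B) (C : Multiset R_C)
    (κA : R_A → V) (κB : R_B → V) (κC : R_C → V)
    (QA : R_A → Prop) (QB : R_B → Prop) (QC : R_C → Prop)
    [DecidablePred QA] [DecidablePred QB] [DecidablePred QC]
    (k : ℕ) (bins : Fin k → Finset V)
    (hdisj : ∀ i j, i ≠ j → Disjoint (bins i) (bins j))
    (hcover : ∀ v : V, ∃ i, v ∈ bins i) :
    (∀ (s : Finset V) (f g h : V → ℕ),
      ∑ v ∈ s, f v * g v * h v ≤
        min ((∑ v ∈ s, f v) * s.sup g * s.sup h)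
          (min ((∑ v ∈ s, g v) * s.sup f * s.sup h)
            ((∑ v ∈ s, h v) * s.sup f * s.sup g))) ∧
    Multiset.card
      (((A.filter QA) ×ˢ (B.filter QB) ×ˢ (C.filter QC)).filter
        (fun p => κA p.1 = κB p.2.1 ∧ κB p.2.1 = κC p.2.2)) ≤
      ∑ i : Fin k,
        min
          ((∑ v ∈ bins i, (A.filter QA).countP (fun a => κA a = v)) *
            ((bins i).sup (fun v => (B.filter QB).countP (fun b => κB b = v))) *
            ((bins i).sup (fun v => (C.filter QC).countP (fun c => κC c = v))))
          (min
            ((∑ v ∈ bins i, (B.filter QB).countP (fun b => κB b = v)) *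
              ((bins i).sup (fun v => (A.filter QA).countP (fun a => κA a = v))) *
              ((bins i).sup (fun v => (C.filter QC).countP (fun c => κC c = v))))
            ((∑ v ∈ bins i, (C.filter QC).countP (fun c => κC c = v)) *
              ((bins i).sup (fun v => (A.filter QA).countP (fun a => κA a = v))) *
              ((bins i).sup (fun v => (B.filter QB).countP (fun b => κB b = v))))) := by
  refine ⟨fun s f g h => s.sum_mul_mul_le_min f g h, ?_⟩
  rw [Multiset.card_filter_keys_eq_eq_sum_countP_mul,
    sum_univ_eq_sum_sum_of_partition bins (fun i j => hdisj i j) hcover]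
  exact sum_le_sum fun i _ => (bins i).sum_mul_mul_le_min _ _ _
end
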